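/- Let K and m be positive integers with 2m − 1 ≤ K, let p ∈ [0,1], and define h(l) = (1/C(K, 2m−1)) · Σ_{i=m}^{2m−1} C(l,i)·C(K−l, 2m−1−i) for l ∈ {0,…,K}. Then Σ_{x=0}^{K−1} C(K−1, x) p^x (1−p)^{K−1−x} · ( h(x+1) − h(x) ) = ((2m−1)/K) · C(2m−2, m−1) · p^{m−1} (1−p)^{m−1}. Equivalently, if X ∼ Binomial(K−1, p), then E[ h(X+1) − h(X) ] = ((2m−1)/K)·C(2m−2, m−1)·p^{m−1}(1−p)^{m−1}. -/

import Mathlib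

/-!
Write `K = 2M + r + 1` and `m = M + 1`. By Pascal's rule the numerator of `h` telescopes:
`h (x + 1) - h x = C(x, M) C(K - 1 - x, M) / C(K, 2M + 1)`. With `N = K - 1`, the binomial
average of `C(X, M) C(N - X, M)` is a factorial moment, `C(N, M) C(N - M, M) pᴹ (1 - p)ᴹ`, and
`C(N, M) C(N - M, M) K = (2M + 1) C(2M, M) C(K, 2M + 1)` finishes the computation.
-/

open Finset

def tailCount (n a l c : ℕ) : ℕ := ∑ i ∈ Icc a n, l.choose i * c.choose (n - i)

theorem tailCount_eq_sum_range (a b l c : ℕ) :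
    tailCount (a + b + 1) (a + 1) l c
      = ∑ j ∈ range (b + 1), l.choose (a + j + 1) * c.choose (b - j) := by
  rw [tailCount, ← Ico_add_one_right_eq_Icc, sum_Ico_eq_sum_range]
  refine sum_congr (by congr 1; omega) fun j _ => ?_
  rw [show a + 1 + j = a + j + 1 by ring, show a + b + 1 - (a + j + 1) = b - j by omega]

/- `tailCount n a l c` counts the `n`-subsets of `l` ones and `c` zeros with at least `a` ones;
turning one of `c + 1` zeros into a one gains exactly the subsets that contain it together with
`a` of the other ones and `b` zeros. -/
theorem tailCount_succ_left (a b l c : ℕ) :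
    tailCount (a + b + 1) (a + 1) (l + 1) c
      = tailCount (a + b + 1) (a + 1) l (c + 1) + l.choose a * c.choose b := by
  let g : ℕ → ℤ := fun j => l.choose (a + j) * c.choose (b - j)
  have pascal : ∀ j ∈ range b,
      ((l + 1).choose (a + j + 1) * c.choose (b - j) : ℤ)
        - l.choose (a + j + 1) * (c + 1).choose (b - j) = g j - g (j + 1) := by
    intro j hj
    obtain ⟨k, hk⟩ : ∃ k, b - j = k + 1 := ⟨b - j - 1, by simp at hj; omega⟩
    simp only [g, hk, show b - (j + 1) = k by omega, Nat.choose_succ_succ', ← add_assoc]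
    push_cast
    ring
  have telescope := sum_range_sub' g b
  rw [← sum_congr rfl pascal, sum_sub_distrib] at telescope
  zify
  rw [tailCount_eq_sum_range, tailCount_eq_sum_range]
  push_cast
  simp only [sum_range_succ, g, Nat.sub_self, Nat.choose_zero_right, Nat.choose_succ_succ',
    add_zero, Nat.sub_zero] at telescope ⊢
  push_cast at telescope ⊢
  linear_combination telescope

theorem choose_mul_choose_mul_choose (a b r y : ℕ) (hy : y ≤ r) :
    (a + b + r).choose (a + y) * (a + y).choose a * (b + r - y).choose b
      = (a + b + r).choose a * (b + r).choose b * r.choose y := by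
  have h₁ : (a + b + r).choose (a + y) * (a + y).choose a = (a + b + r).choose a * (b + r).choose y := by
    rw [Nat.choose_mul (by omega), show a + b + r - a = b + r by omega, Nat.add_sub_cancel_left]
  have h₂ : (b + r).choose y * (b + r - y).choose b = (b + r).choose b * r.choose y := by
    have := Nat.choose_mul (n := b + r) hy
    rw [← Nat.choose_symm_of_eq_add (show b + r - y = (r - y) + b by omega), ← this,
      Nat.choose_symm_add]
  rw [h₁, mul_assoc, h₂, mul_assoc]

theorem choose_mul_choose_mul_add_one (a b r : ℕ) :
    (a + b + r).choose a * (b + r).choose b * (a + b + r + 1)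
      = (a + b + 1) * (a + b).choose a * (a + b + r + 1).choose (a + b + 1) := by
  have := Nat.choose_mul (n := a + b + r) (le_add_right (le_refl a) : a ≤ a + b)
  rw [show a + b + r - a = b + r by omega, Nat.add_sub_cancel_left] at this
  rw [← this, mul_comm _ (a + b + r + 1), ← mul_assoc, Nat.add_one_mul_choose_eq]
  ring

theorem sum_choose_mul_pow_mul_choose_mul_choose {S : Type*} [CommSemiring S] (a b r : ℕ) (p q : S) :
    ∑ x ∈ range (a + b + r + 1),
        ((a + b + r).choose x : S) * p ^ x * q ^ (a + b + r - x)
          * (x.choose a * (a + b + r - x).choose b)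
      = (a + b + r).choose a * (b + r).choose b * p ^ a * q ^ b * (p + q) ^ r := by
  rw [← sum_subset (s₁ := Icc a (a + r))]
  rotate_left
  · intro x hx; simp only [mem_Icc, mem_range] at hx ⊢; omega
  · intro x hxN hx
    simp only [mem_range, mem_Icc] at hxN hx
    rcases lt_or_ge x a with hx | hx
    · simp [Nat.choose_eq_zero_of_lt hx]
    · simp [Nat.choose_eq_zero_of_lt (show a + b + r - x < b by omega)]
  rw [← Ico_add_one_right_eq_Icc, sum_Ico_eq_sum_range, show a + r + 1 - a = r + 1 by omega,
    add_pow, mul_sum]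
  refine sum_congr rfl fun y hy => ?_
  have hy : y ≤ r := Nat.lt_succ_iff.mp (mem_range.mp hy)
  have key := congrArg (Nat.cast (R := S)) (choose_mul_choose_mul_choose a b r y hy)
  rw [show a + b + r - (a + y) = b + r - y by omega, show b + r - y = b + (r - y) by omega, pow_add,
    pow_add]
  push_cast at key
  rw [show b + r - y = b + (r - y) by omega] at key
  calc _ = ((a + b + r).choose (a + y) * (a + y).choose a * (b + (r - y)).choose b : S)
        * (p ^ a * q ^ b * (p ^ y * q ^ (r - y))) := by ring
    _ = _ := by rw [key]; ring

theorem statement13 (K m : ℕ) (hm : 0 < m) (hmK : 2 * m - 1 ≤ K)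
    (p : ℝ)
    (h : ℕ → ℝ)
    (hh : ∀ l, h l = (∑ i ∈ Finset.Icc m (2 * m - 1),
        (l.choose i : ℝ) * ((K - l).choose (2 * m - 1 - i) : ℝ))
        / (K.choose (2 * m - 1) : ℝ)) :
    ∑ x ∈ Finset.range K,
        ((K - 1).choose x : ℝ) * p ^ x * (1 - p) ^ (K - 1 - x) * (h (x + 1) - h x)
    = (((2 * m - 1 : ℕ) : ℝ) / (K : ℝ)) * ((2 * m - 2).choose (m - 1) : ℝ) *
        p ^ (m - 1) * (1 - p) ^ (m - 1) := by
  obtain ⟨M, rfl⟩ : ∃ M, m = M + 1 := ⟨m - 1, by omega⟩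
  obtain ⟨r, rfl⟩ : ∃ r, K = M + M + r + 1 := ⟨K - (2 * M + 1), by omega⟩
  simp only [show 2 * (M + 1) - 1 = M + M + 1 by omega, show 2 * (M + 1) - 2 = M + M by omega,
    Nat.add_sub_cancel] at hh ⊢
  have h_eq_tailCount (l : ℕ) : h l = tailCount (M + M + 1) (M + 1) l (M + M + r + 1 - l)
      / ((M + M + r + 1).choose (M + M + 1) : ℝ) := by
    simp [hh, tailCount]
  have hdiff : ∀ x ∈ range (M + M + r + 1), h (x + 1) - h x
      = (x.choose M * (M + M + r - x).choose M : ℝ) / (M + M + r + 1).choose (M + M + 1) := by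
    intro x hx
    have hx : x ≤ M + M + r := Nat.lt_succ_iff.mp (mem_range.mp hx)
    rw [h_eq_tailCount, h_eq_tailCount, ← sub_div, show M + M + r + 1 - x = M + M + r - x + 1 by omega,
      show M + M + r + 1 - (x + 1) = M + M + r - x by omega, tailCount_succ_left]
    push_cast
    ring
  have hC : ((M + M + r + 1).choose (M + M + 1) : ℝ) ≠ 0 :=
    Nat.cast_ne_zero.mpr (Nat.choose_pos (by omega)).ne'
  calc _ = (∑ x ∈ range (M + M + r + 1), ((M + M + r).choose x : ℝ) * p ^ x
          * (1 - p) ^ (M + M + r - x) * (x.choose M * (M + M + r - x).choose M))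
        / (M + M + r + 1).choose (M + M + 1) := by
        rw [sum_div]
        exact sum_congr rfl fun x hx => by rw [hdiff x hx]; ring
    _ = _ := by
        have hconst := congrArg (Nat.cast (R := ℝ)) (choose_mul_choose_mul_add_one M M r)
        push_cast at hconst
        rw [sum_choose_mul_pow_mul_choose_mul_choose, add_sub_cancel, one_pow]
        field_simp
        push_cast
        linear_combination (p ^ M * (1 - p) ^ M) * hconst
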